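/- arXiv:2508.06694 — 6 statements merged into one kernel-verified Lean document; each statement's English description precedes it below -/
import Mathlib

section
/- Gallery-existence theorem (Theorem 3.1, main part): Let F be a one-dimensional tropical fan in ℝ^n with primitive generators v_1, …, v_q and weights ω_1, …, ω_q, and let M(x) = max(0, l_1(x), …, l_k(x)) be a nonnegative tropical regular function such that M·F = Σ_{i=1}^q ω_i M(v_i) = 1. Then F admits a gallery supported on a linear functional of M: there exist distinct indices a, b ∈ {1,…,q} and an index s ∈ {1,…,k} such that ω_a = ω_b = 1, l_s(v_a) = 1, l_s(v_b) = −1, and l_s(v_j) = 0 for all j ∉ {a, b}. -/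
/-- Integer pairing of a functional `l ∈ (ℤⁿ)^∨` with a vector `x ∈ ℤⁿ`. -/
def dotZ {n : ℕ} (l x : Fin n → ℤ) : ℤ := ∑ j, l j * x j

/-- Value of the nonnegative tropical regular function `max(0, l₁, …, l_k)` at `x ∈ ℤⁿ`. -/
def tropEvalZ {n k : ℕ} (l : Fin k → Fin n → ℤ) (x : Fin n → ℤ) : ℤ :=
  Finset.univ.fold max 0 (fun s => dotZ (l s) x)

/-- A one-dimensional tropical fan in ℝⁿ: pairwise distinct primitive integer vectors
`v i` (the primitive generators of the rays) spanning ℝⁿ, with positive integer weights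
`w i`, subject to the balancing condition `∑ i, w i • v i = 0`. -/
structure TropFan1 (n q : ℕ) where
  v : Fin q → Fin n → ℤ
  w : Fin q → ℤ
  v_inj : Function.Injective v
  v_prim : ∀ i, Finset.univ.gcd (v i) = 1
  w_pos : ∀ i, 0 < w i
  balanced : ∑ i, w i • v i = 0
  spans : Submodule.span ℝ (Set.range fun i => fun j => ((v i j : ℝ))) = ⊤

/-- A gallery of `F` on the pair of distinct indices `(a, b)`. -/
def IsGallery {n q : ℕ} (F : TropFan1 n q) (a b : Fin q) (l : Fin n → ℤ) : Prop :=
  a ≠ b ∧ F.w a = 1 ∧ F.w b = 1 ∧ dotZ l (F.v a) = 1 ∧ dotZ l (F.v b) = -1 ∧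
    ∀ j, j ≠ a → j ≠ b → dotZ l (F.v j) = 0

/-!
The intersection number `∑ ωᵢ M(vᵢ) = 1` is a sum of nonnegative integers, so exactly one
ray `v_a` has `ω_a = 1`, `M(v_a) = 1`, and `M` vanishes on all other rays. Pick `l_s` attaining
`M(v_a) = 1`. Balancing gives `∑ ωⱼ (-l_s(vⱼ)) = 1` over `j ≠ a`, and each term is nonnegative
since `l_s ≤ M = 0` there; the same counting yields the ray `v_b`.
-/

open Finset

theorem Finset.exists_eq_one_of_sum_eq_one_of_nonneg {α : Type*} [DecidableEq α]
    {s : Finset α} {f : α → ℤ} (hf : ∀ i ∈ s, 0 ≤ f i) (h : ∑ i ∈ s, f i = 1) :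
    ∃ a ∈ s, f a = 1 ∧ ∀ j ∈ s, j ≠ a → f j = 0 := by
  obtain ⟨a, ha, hfa⟩ := exists_ne_zero_of_sum_ne_zero (h ▸ one_ne_zero)
  have hrest : 0 ≤ ∑ j ∈ s.erase a, f j := sum_nonneg fun j hj => hf j (mem_of_mem_erase hj)
  rw [← add_sum_erase s f ha] at h
  have hfa_pos := (hf a ha).lt_of_ne' hfa
  have hrest_zero : ∑ j ∈ s.erase a, f j = 0 := by omega
  refine ⟨a, ha, by omega, fun j hj hja => ?_⟩
  exact (sum_eq_zero_iff_of_nonneg fun i hi => hf i (mem_of_mem_erase hi)).mp hrest_zero j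
    (mem_erase.mpr ⟨hja, hj⟩)

theorem Finset.exists_eq_one_of_sum_mul_eq_one_of_nonneg {α : Type*} [DecidableEq α]
    {s : Finset α} {w f : α → ℤ} (hw : ∀ i ∈ s, 0 < w i) (hf : ∀ i ∈ s, 0 ≤ f i)
    (h : ∑ i ∈ s, w i * f i = 1) :
    ∃ a ∈ s, w a = 1 ∧ f a = 1 ∧ ∀ j ∈ s, j ≠ a → f j = 0 := by
  obtain ⟨a, ha, hwfa, hwf⟩ := exists_eq_one_of_sum_eq_one_of_nonneg
    (fun i hi => mul_nonneg (hw i hi).le (hf i hi)) h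
  have hwa : w a = 1 := Int.eq_one_of_mul_eq_one_right (hw a ha).le hwfa
  refine ⟨a, ha, hwa, by simpa [hwa] using hwfa, fun j hj hja => ?_⟩
  exact (mul_eq_zero.mp (hwf j hj hja)).resolve_left (hw j hj).ne'

section tropEvalZ

variable {n k : ℕ} (l : Fin k → Fin n → ℤ) (x : Fin n → ℤ)

theorem tropEvalZ_nonneg : 0 ≤ tropEvalZ l x :=
  (le_fold_max _).2 (Or.inl le_rfl)

theorem dotZ_le_tropEvalZ (s : Fin k) : dotZ (l s) x ≤ tropEvalZ l x :=
  (le_fold_max _).2 (Or.inr ⟨s, mem_univ s, le_rfl⟩)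

theorem exists_dotZ_eq_tropEvalZ_of_pos (h : 0 < tropEvalZ l x) :
    ∃ s, dotZ (l s) x = tropEvalZ l x := by
  rcases (le_fold_max _).1 (le_refl (tropEvalZ l x)) with h0 | ⟨s, -, hs⟩
  · exact absurd h (not_lt.mpr h0)
  · exact ⟨s, (dotZ_le_tropEvalZ l x s).antisymm hs⟩

end tropEvalZ

theorem TropFan1.sum_mul_dotZ_eq_zero {n q : ℕ} (F : TropFan1 n q) (l : Fin n → ℤ) :
    ∑ i, F.w i * dotZ l (F.v i) = 0 := by
  calc ∑ i, F.w i * dotZ l (F.v i) = l ⬝ᵥ ∑ i, F.w i • F.v i := by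
        simp only [dotProduct_sum, dotProduct_smul, smul_eq_mul]; rfl
    _ = 0 := by rw [F.balanced, dotProduct_zero]

/-- Gallery-existence theorem (Theorem 3.1, main part). -/
theorem gallery_existence {n q k : ℕ} (F : TropFan1 n q)
    (l : Fin k → Fin n → ℤ)
    (h : ∑ i, F.w i * tropEvalZ l (F.v i) = 1) :
    ∃ a b : Fin q, a ≠ b ∧ ∃ s : Fin k,
      F.w a = 1 ∧ F.w b = 1 ∧ dotZ (l s) (F.v a) = 1 ∧ dotZ (l s) (F.v b) = -1 ∧
      ∀ j, j ≠ a → j ≠ b → dotZ (l s) (F.v j) = 0 := by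
  obtain ⟨a, -, hwa, hMa, hM⟩ := exists_eq_one_of_sum_mul_eq_one_of_nonneg
    (fun i _ => F.w_pos i) (fun i _ => tropEvalZ_nonneg l (F.v i)) h
  obtain ⟨s, hs⟩ := exists_dotZ_eq_tropEvalZ_of_pos l (F.v a) (hMa ▸ one_pos)
  rw [hMa] at hs
  have hrest : ∑ j ∈ univ.erase a, F.w j * -dotZ (l s) (F.v j) = 1 := by
    have hbal := F.sum_mul_dotZ_eq_zero (l s)
    rw [← add_sum_erase _ _ (mem_univ a), hwa, hs] at hbal
    simp only [mul_neg, sum_neg_distrib]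
    omega
  have hrest_nonneg : ∀ j ∈ univ.erase a, 0 ≤ -dotZ (l s) (F.v j) := fun j hj =>
    neg_nonneg.mpr <| (dotZ_le_tropEvalZ l _ s).trans_eq (hM j (mem_univ j) (ne_of_mem_erase hj))
  obtain ⟨b, hb, hwb, hsb, hzero⟩ := exists_eq_one_of_sum_mul_eq_one_of_nonneg
    (fun i _ => F.w_pos i) hrest_nonneg hrest
  refine ⟨a, b, (ne_of_mem_erase hb).symm, s, hwa, hwb, hs, by omega, fun j hja hjb => ?_⟩
  exact neg_eq_zero.mp (hzero j (mem_erase.mpr ⟨hja, mem_univ j⟩) hjb)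
end

section
/- Coordinate normalization (Theorem 3.1, second part): Let F be a one-dimensional tropical fan in ℝ^n with primitive generators v_1, …, v_q and weights ω_1, …, ω_q, and suppose l ∈ (ℤ^n)^∨ is a gallery of F on a pair of distinct indices (a, b). Then there exist a matrix T ∈ GL(n, ℤ) and an integer m ∈ ℤ such that T v_a = e_1, T v_b = −e_1 + m·e_n, and the first coordinate of T v_j is 0 for every j ∉ {a, b} (here e_1, …, e_n denotes the standard basis of ℤ^n). -/
/-- Bezout over a finset. -/
lemma bezout_finset {ι : Type*} [DecidableEq ι] (u : ι → ℤ) (s : Finset ι) :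
    ∃ c : ι → ℤ, ∑ i ∈ s, c i * u i = s.gcd u := by
  induction s using Finset.induction_on with
  | empty => exact ⟨0, by simp⟩
  | insert a s ha ih =>
    obtain ⟨c, hc⟩ := ih
    set A := Int.gcdA (u a) (s.gcd u)
    set B := Int.gcdB (u a) (s.gcd u)
    refine ⟨fun i => if i = a then A else B * c i, ?_⟩
    have key : ∑ i ∈ s, (if i = a then A else B * c i) * u i = B * ∑ i ∈ s, c i * u i := by
      rw [Finset.mul_sum]
      refine Finset.sum_congr rfl fun i hi => ?_
      have hia : i ≠ a := fun h => ha (h ▸ hi)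
      rw [if_neg hia]; ring
    have ha' : (fun i => if i = a then A else B * c i) a * u a = A * u a := by simp
    rw [Finset.sum_insert ha, ha', key, hc, Finset.gcd_insert, ← Int.coe_gcd,
      Int.gcd_eq_gcd_ab]
    ring

/-- The "cons" linear equivalence. -/
def consLE (r : ℕ) : (ℤ × (Fin r → ℤ)) ≃ₗ[ℤ] (Fin (r + 1) → ℤ) where
  toFun p := Fin.cons p.1 p.2
  invFun x := (x 0, Fin.tail x)
  map_add' p q := by
    funext i
    refine Fin.cases ?_ (fun j => ?_) i <;> simp
  map_smul' m p := by
    funext i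
    refine Fin.cases ?_ (fun j => ?_) i <;> simp
  left_inv p := by simp
  right_inv x := by simp

@[simp] lemma consLE_apply {r : ℕ} (c : ℤ) (y : Fin r → ℤ) :
    consLE r (c, y) = Fin.cons c y := rfl

lemma cons_one_zero_eq_single {r : ℕ} :
    (Fin.cons 1 (0 : Fin r → ℤ) : Fin (r+1) → ℤ) = Pi.single 0 1 := by
  funext i
  refine Fin.cases ?_ (fun j => ?_) i
  · simp
  · simp [Pi.single_eq_of_ne (Fin.succ_ne_zero j)]

/-- dotZ as a linear map. -/
def dotL {n : ℕ} (l : Fin n → ℤ) : (Fin n → ℤ) →ₗ[ℤ] ℤ where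
  toFun x := dotZ l x
  map_add' x y := by simp [dotZ, mul_add, Finset.sum_add_distrib]
  map_smul' c x := by
    simp [dotZ, Finset.mul_sum, mul_left_comm]

/-- Key lemma: normalize a vector paired to 1 with a functional. -/
lemma exists_equiv {r : ℕ} (l v : Fin (r + 1) → ℤ) (h : dotZ l v = 1) :
    ∃ φ : (Fin (r + 1) → ℤ) ≃ₗ[ℤ] (Fin (r + 1) → ℤ),
      φ v = Pi.single 0 1 ∧ ∀ x, φ x 0 = dotZ l x := by
  classical
  set f : (Fin (r + 1) → ℤ) →ₗ[ℤ] ℤ := dotL l with hf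
  have hv : f v = 1 := h
  set K := LinearMap.ker f with hK
  set P : (Fin (r + 1) → ℤ) →ₗ[ℤ] (Fin (r + 1) → ℤ) := LinearMap.id - f.smulRight v with hP
  have hPapply : ∀ x, P x = x - f x • v := fun x => rfl
  have hPK : ∀ x, P x ∈ K := by
    intro x
    rw [hK, LinearMap.mem_ker, hPapply, map_sub, map_smul, hv, smul_eq_mul, mul_one, sub_self]
  set fwd : (Fin (r + 1) → ℤ) →ₗ[ℤ] ℤ × K := f.prod (P.codRestrict K hPK) with hfwd
  set bwd : ℤ × K →ₗ[ℤ] (Fin (r + 1) → ℤ) :=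
    (LinearMap.fst ℤ ℤ K).smulRight v + K.subtype.comp (LinearMap.snd ℤ ℤ K) with hbwd
  have hbwd_apply : ∀ (c : ℤ) (k : K), bwd (c, k) = c • v + (k : Fin (r + 1) → ℤ) := by
    intro c k
    simp [hbwd]
  have hfwd_apply : ∀ x, fwd x = (f x, ⟨P x, hPK x⟩) := fun x => rfl
  have h1 : fwd.comp bwd = LinearMap.id := by
    apply LinearMap.ext
    rintro ⟨c, k⟩
    have hk' : f (k : Fin (r + 1) → ℤ) = 0 := k.2
    have hfck : f (c • v + (k : Fin (r + 1) → ℤ)) = c := by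
      rw [map_add, map_smul, hv, hk', smul_eq_mul, mul_one, add_zero]
    rw [LinearMap.comp_apply, hbwd_apply, hfwd_apply, LinearMap.id_apply]
    refine Prod.ext hfck (Subtype.ext ?_)
    show P _ = (k : Fin (r + 1) → ℤ)
    rw [hPapply, hfck]
    abel
  have h2 : bwd.comp fwd = LinearMap.id := by
    apply LinearMap.ext
    intro x
    rw [LinearMap.comp_apply, hfwd_apply, hbwd_apply, LinearMap.id_apply]
    have hcoe : ((⟨P x, hPK x⟩ : K) : Fin (r + 1) → ℤ) = P x := rfl
    rw [hcoe, hPapply]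
    abel
  set ψ : (Fin (r + 1) → ℤ) ≃ₗ[ℤ] ℤ × K := LinearEquiv.ofLinear fwd bwd h1 h2 with hψ
  have hrank : Module.finrank ℤ K = r := by
    have e1 : Module.finrank ℤ (Fin (r + 1) → ℤ) = r + 1 := by
      simp [Module.finrank_pi]
    have e2 := ψ.finrank_eq
    rw [e1, Module.finrank_prod, Module.finrank_self] at e2
    omega
  set c : Module.Basis (Fin r) ℤ K := Module.finBasisOfFinrankEq ℤ K hrank with hc
  set φ : (Fin (r + 1) → ℤ) ≃ₗ[ℤ] (Fin (r + 1) → ℤ) :=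
    (ψ.trans ((LinearEquiv.refl ℤ ℤ).prodCongr c.equivFun)).trans (consLE r) with hφ
  have happly : ∀ x, φ x = Fin.cons (f x) (c.equivFun ⟨P x, hPK x⟩) := fun x => rfl
  refine ⟨φ, ?_, ?_⟩
  · rw [happly]
    have hPv : P v = 0 := by rw [hPapply, hv, one_smul, sub_self]
    have h0 : (⟨P v, hPK v⟩ : K) = 0 := Subtype.ext (by simp [hPv])
    rw [hv, h0, map_zero, cons_one_zero_eq_single]
  · intro x
    rw [happly]
    simp only [Fin.cons_zero]
    rfl

lemma swap_single {s : ℕ} :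
    (LinearEquiv.funCongrLeft ℤ ℤ (Equiv.swap (0 : Fin (s + 1)) (Fin.last s)))
      (Pi.single 0 1) = Pi.single (Fin.last s) 1 := by
  funext j
  simp only [LinearEquiv.funCongrLeft_apply, LinearMap.funLeft_apply]
  rcases eq_or_ne j (Fin.last s) with rfl | hjl
  · rw [Equiv.swap_apply_right, Pi.single_eq_same, Pi.single_eq_same]
  · rcases eq_or_ne j 0 with rfl | hj0
    · rw [Equiv.swap_apply_left, Pi.single_eq_of_ne (Ne.symm hjl), Pi.single_eq_of_ne hjl]
    · rw [Equiv.swap_apply_of_ne_of_ne hj0 hjl, Pi.single_eq_of_ne hj0, Pi.single_eq_of_ne hjl]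

lemma stage2 {r : ℕ} (u : Fin r → ℤ) :
    ∃ (σ : (Fin r → ℤ) ≃ₗ[ℤ] (Fin r → ℤ)) (g : ℤ), (r = 0 → g = 0) ∧
      ∀ i : Fin r, σ u i = if (i : ℕ) = r - 1 then g else 0 := by
  classical
  rcases eq_or_ne u 0 with rfl | hu
  · refine ⟨LinearEquiv.refl _ _, 0, fun _ => rfl, fun i => ?_⟩
    simp
  · obtain ⟨s, rfl⟩ : ∃ s, r = s + 1 := by
      rcases r with _ | s
      · exact absurd (funext fun i => i.elim0) hu
      · exact ⟨s, rfl⟩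
    set g := Finset.univ.gcd u with hgdef
    have hg0 : g ≠ 0 := by
      intro h
      exact hu (funext fun i => Finset.gcd_eq_zero_iff.mp h i (Finset.mem_univ i))
    have hdvd : ∀ i, g ∣ u i := fun i => Finset.gcd_dvd (Finset.mem_univ i)
    set u' : Fin (s + 1) → ℤ := fun i => u i / g with hu'def
    have hgu : ∀ i, u i = g * u' i := fun i => (Int.mul_ediv_cancel' (hdvd i)).symm
    obtain ⟨cc, hcc⟩ := bezout_finset u Finset.univ
    have hdot : dotZ cc u' = 1 := by
      have hsplit : dotZ cc u = g * dotZ cc u' := by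
        unfold dotZ
        rw [Finset.mul_sum]
        exact Finset.sum_congr rfl fun i _ => by rw [hgu i]; ring
      exact mul_left_cancel₀ hg0 (by rw [← hsplit, mul_one]; exact hcc)
    obtain ⟨φ, hφ1, -⟩ := exists_equiv cc u' hdot
    set sw := LinearEquiv.funCongrLeft ℤ ℤ (Equiv.swap (0 : Fin (s + 1)) (Fin.last s)) with hsw
    refine ⟨φ.trans sw, g, fun h => absurd h (Nat.succ_ne_zero s), fun i => ?_⟩
    have hufun : u = g • u' := funext fun i => by rw [Pi.smul_apply, smul_eq_mul]; exact hgu i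
    have : (φ.trans sw) u = g • Pi.single (Fin.last s) 1 := by
      rw [LinearEquiv.trans_apply, hufun, map_smul, hφ1, map_smul, swap_single]
    rw [this]
    rcases eq_or_ne i (Fin.last s) with rfl | hil
    · rw [if_pos (by simp [Fin.last])]
      simp
    · rw [if_neg (by
        intro h
        exact hil (Fin.ext (by simpa [Fin.last] using h)) )]
      simp [Pi.single_eq_of_ne hil]

/-- Coordinate normalization (Theorem 3.1, second part): a gallery functional can be
normalized by a `GL(n, ZZ)` transformation `T` so that `T v_a = e_1`,
`T v_b = -e_1 + m * e_n`, and the first coordinate of `T v_j` vanishes for `j not in {a, b}`. -/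
theorem coordinate_normalization {n q : ℕ} (hn : 0 < n) (F : TropFan1 n q)
    (a b : Fin q) (l : Fin n → ℤ) (hg : IsGallery F a b l) :
    ∃ (T : Matrix (Fin n) (Fin n) ℤ) (m : ℤ), IsUnit T.det ∧
      T.mulVec (F.v a) = Pi.single (⟨0, hn⟩ : Fin n) 1 ∧
      T.mulVec (F.v b) =
        -Pi.single (⟨0, hn⟩ : Fin n) 1 + m • Pi.single (⟨n - 1, Nat.sub_lt hn one_pos⟩ : Fin n) 1 ∧
      ∀ j, j ≠ a → j ≠ b → T.mulVec (F.v j) ⟨0, hn⟩ = 0 := by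
  classical
  obtain ⟨r, rfl⟩ : ∃ r, n = r + 1 := ⟨n - 1, by omega⟩
  obtain ⟨hab, hwa, hwb, hla, hlb, hl0⟩ := hg
  obtain ⟨φ, hφa, hφ0⟩ := exists_equiv l (F.v a) hla
  set u := Fin.tail (φ (F.v b)) with hu
  obtain ⟨σ, g, hg0, hσ⟩ := stage2 u
  set τ : (Fin (r + 1) → ℤ) ≃ₗ[ℤ] (Fin (r + 1) → ℤ) :=
    (consLE r).symm.trans (((LinearEquiv.refl ℤ ℤ).prodCongr σ).trans (consLE r)) with hτdef
  have hτ : ∀ x, τ x = Fin.cons (x 0) (σ (Fin.tail x)) := fun x => rfl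
  set Φ := φ.trans τ with hΦdef
  set T := LinearMap.toMatrix' (Φ : (Fin (r + 1) → ℤ) →ₗ[ℤ] (Fin (r + 1) → ℤ)) with hTdef
  have hT : ∀ x, T.mulVec x = Φ x := by
    intro x
    rw [hTdef, ← Matrix.toLin'_apply, Matrix.toLin'_toMatrix']
    rfl
  have h00 : (⟨0, hn⟩ : Fin (r + 1)) = 0 := Fin.ext (by simp)
  have hΦ0 : ∀ x, Φ x 0 = dotZ l x := by
    intro x
    rw [hΦdef, LinearEquiv.trans_apply, hτ, Fin.cons_zero, hφ0]
  refine ⟨T, g, ?_, ?_, ?_, ?_⟩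
  · have hinv : T * LinearMap.toMatrix'
        (Φ.symm : (Fin (r + 1) → ℤ) →ₗ[ℤ] (Fin (r + 1) → ℤ)) = 1 := by
      rw [hTdef, ← LinearMap.toMatrix'_comp]
      have : (Φ : (Fin (r + 1) → ℤ) →ₗ[ℤ] (Fin (r + 1) → ℤ)).comp
          (Φ.symm : (Fin (r + 1) → ℤ) →ₗ[ℤ] (Fin (r + 1) → ℤ)) = LinearMap.id :=
        LinearMap.ext fun x => by simp
      rw [this, LinearMap.toMatrix'_id]
    exact Matrix.isUnit_det_of_right_inverse hinv
  · rw [hT, h00, hΦdef, LinearEquiv.trans_apply, hφa, hτ]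
    have ht0 : Fin.tail ((Pi.single (0 : Fin (r + 1)) (1 : ℤ) : Fin (r + 1) → ℤ)) = (0 : Fin r → ℤ) := by
      funext j
      simp only [Fin.tail, Pi.zero_apply]
      exact Pi.single_eq_of_ne (Fin.succ_ne_zero j) 1
    rw [ht0, map_zero, Pi.single_eq_same, cons_one_zero_eq_single]
  · rw [hT, h00, hΦdef, LinearEquiv.trans_apply, hτ, hφ0, hlb, ← hu]
    simp only [Nat.add_sub_cancel]
    funext i
    refine Fin.cases ?_ (fun j => ?_) i
    · rw [Fin.cons_zero, Pi.add_apply, Pi.neg_apply, Pi.single_eq_same, Pi.smul_apply]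
      rcases Nat.eq_zero_or_pos r with rfl | hr
      · rw [hg0 rfl]; simp
      · have hne : (0 : Fin (r + 1)) ≠ ⟨r, by omega⟩ := by
          intro h; have := congrArg Fin.val h; simp at this; omega
        rw [Pi.single_eq_of_ne hne, smul_zero, add_zero]
    · rw [Fin.cons_succ, hσ j, Pi.add_apply, Pi.neg_apply, Pi.smul_apply,
        Pi.single_eq_of_ne (Fin.succ_ne_zero j), neg_zero, zero_add]
      by_cases hjr : (j : ℕ) = r - 1
      · have hj1 : (j : ℕ) + 1 = r := by have := j.isLt; omega
        have heq : Fin.succ j = (⟨r, by omega⟩ : Fin (r + 1)) := Fin.ext (by simp [hj1])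
        rw [if_pos hjr, heq, Pi.single_eq_same, smul_eq_mul, mul_one]
      · have hne : Fin.succ j ≠ (⟨r, by omega⟩ : Fin (r + 1)) := by
          intro h; have := congrArg Fin.val h
          simp at this; have := j.isLt; omega
        rw [if_neg hjr, Pi.single_eq_of_ne hne, smul_zero]
  · intro j hja hjb
    rw [hT, h00, hΦ0, hl0 j hja hjb]
end

section
/- Maximal regular TR function on an equivalence class (Theorem 3.11, maximality direction): Let F be a one-dimensional tropical fan in ℝ^n with primitive generators v_1, …, v_q spanning ℝ^n and weights ω_1, …, ω_q. Fix an index i and a nonempty subset J ⊆ {1,…,q} \ {i}, and for each j ∈ J let l_j ∈ (ℤ^n)^∨ be a gallery of F on (i, j) (so l_j(v_i) = 1, l_j(v_j) = −1, l_j(v_t) = 0 for t ∉ {i, j}, and ω_i = ω_j = 1). Assume J is saturated: for no index ρ ∉ J ∪ {i} does there exist a gallery of F on (i, ρ). Define M_max(x) = max(0, max_{j ∈ J} l_j(x)). Then every nonnegative TR function M with M·F = Σ_t ω_t M(v_t) = 1 and M(v_i) = 1 satisfies M(x) ≤ M_max(x) for all x ∈ ℝ^n. -/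
/-- Value of the nonnegative tropical regular function `max(0, l_1, ..., l_k)` at a real
point `x` of ℝⁿ. -/
def tropEvalR {n k : ℕ} (l : Fin k → Fin n → ℤ) (x : Fin n → ℝ) : ℝ :=
  Finset.univ.fold max 0 (fun s => ∑ j, (l s j : ℝ) * x j)

def lfun {n : ℕ} (d : Fin n → ℤ) : (Fin n → ℝ) →ₗ[ℝ] ℝ where
  toFun := fun x => ∑ j, (d j : ℝ) * x j
  map_add' := by intros x y; simp [mul_add, Finset.sum_add_distrib]
  map_smul' := by intros r x; simp [Finset.mul_sum, mul_left_comm]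

lemma dot_cast {n : ℕ} (d y : Fin n → ℤ) :
    ∑ j, (d j : ℝ) * (y j : ℝ) = ((dotZ d y : ℤ) : ℝ) := by
  push_cast [dotZ]; ring_nf

/-- Two integer covectors agreeing on all rays of `F` induce the same real functional. -/
lemma eq_on_span {n q : ℕ} (F : TropFan1 n q) (d e : Fin n → ℤ)
    (h : ∀ t, dotZ d (F.v t) = dotZ e (F.v t)) (x : Fin n → ℝ) :
    ∑ j, (d j : ℝ) * x j = ∑ j, (e j : ℝ) * x j := by
  have : lfun d = lfun e := by
    apply LinearMap.ext_on_range F.spans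
    intro t
    show ∑ j, (d j : ℝ) * (F.v t j : ℝ) = ∑ j, (e j : ℝ) * (F.v t j : ℝ)
    rw [dot_cast, dot_cast, h t]
  exact congrArg (fun f => f x) (congrArg DFunLike.coe this)

/-- Maximal regular TR function on an equivalence class (Theorem 3.11, maximality):
any nonnegative TR function `M` with `M·F = 1` and `M(v_i) = 1` is bounded above by
`M_max(x) = max(0, max_{j ∈ J} l_j(x))`, where the `l_j` are the galleries on `(i, j)`,
`j` running over the (saturated) set `J`. -/
theorem maximal_TR_function {n q : ℕ} (F : TropFan1 n q) (i : Fin q) (J : Finset (Fin q))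
    (hJ : J.Nonempty) (hiJ : i ∉ J) (l : Fin q → Fin n → ℤ)
    (hgal : ∀ j ∈ J, IsGallery F i j (l j))
    (hsat : ∀ ρ : Fin q, ρ ∉ J → ρ ≠ i → ¬ ∃ g : Fin n → ℤ, IsGallery F i ρ g)
    (M : (Fin n → ℝ) → ℝ) (k : ℕ) (c : Fin k → Fin n → ℤ)
    (hM : ∀ x, M x = tropEvalR c x)
    (hMF : ∑ t, (F.w t : ℝ) * M (fun j => (F.v t j : ℝ)) = 1)
    (hMi : M (fun j => (F.v i j : ℝ)) = 1) :
    ∀ x : Fin n → ℝ, M x ≤ max 0 (J.sup' hJ fun j => ∑ s, (l j s : ℝ) * x s) := by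
  -- nonnegativity of tropEvalR and term bound
  have hnonneg : ∀ x : Fin n → ℝ, 0 ≤ tropEvalR c x := by
    intro x
    exact (Finset.le_fold_max 0).mpr (Or.inl le_rfl)
  have hterm : ∀ (s : Fin k) (x : Fin n → ℝ), ∑ j, (c s j : ℝ) * x j ≤ tropEvalR c x := by
    intro s x
    exact (Finset.le_fold_max _).mpr (Or.inr ⟨s, Finset.mem_univ s, le_rfl⟩)
  -- Step 1: w i = 1 and M(v_t) = 0 for t ≠ i
  set V : Fin q → Fin n → ℝ := fun t j => (F.v t j : ℝ) with hV
  have hsplit : (F.w i : ℝ) * M (V i) + ∑ t ∈ Finset.univ.erase i,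
      (F.w t : ℝ) * M (V t) = 1 := by
    exact (Finset.add_sum_erase Finset.univ (fun t => (F.w t : ℝ) * M (V t))
      (Finset.mem_univ i)).trans hMF
  have hMnn : ∀ t, 0 ≤ M (V t) := fun t => (hM (V t)) ▸ hnonneg (V t)
  have hStail_nn : ∀ t ∈ Finset.univ.erase i, (0:ℝ) ≤ (F.w t : ℝ) * M (V t) := by
    intro t _
    exact mul_nonneg (by exact_mod_cast (F.w_pos t).le) (hMnn t)
  have hwi1 : F.w i = 1 := by
    have h1 : (F.w i : ℝ) ≤ 1 := by
      have := Finset.sum_nonneg hStail_nn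
      have hMi' : M (V i) = 1 := hMi
      nlinarith [hsplit]
    have h2 : (1:ℤ) ≤ F.w i := F.w_pos i
    exact_mod_cast le_antisymm (by exact_mod_cast h1) h2
  have hStail0 : ∀ t ∈ Finset.univ.erase i, (F.w t : ℝ) * M (V t) = 0 := by
    have hsum0 : ∑ t ∈ Finset.univ.erase i, (F.w t : ℝ) * M (V t) = 0 := by
      have hMi' : M (V i) = 1 := hMi
      rw [hMi', hwi1] at hsplit; push_cast at hsplit; linarith
    exact (Finset.sum_eq_zero_iff_of_nonneg hStail_nn).mp hsum0
  have hMt0 : ∀ t, t ≠ i → M (V t) = 0 := by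
    intro t ht
    have := hStail0 t (Finset.mem_erase.mpr ⟨ht, Finset.mem_univ t⟩)
    have hw : (F.w t : ℝ) ≠ 0 := by exact_mod_cast (F.w_pos t).ne'
    exact (mul_eq_zero.mp this).resolve_left hw
  -- balancing, componentwise
  have hbal : ∀ j, ∑ t, F.w t * F.v t j = 0 := by
    intro j
    have := congrFun F.balanced j
    simpa [Finset.sum_apply] using this
  intro x
  rw [hM]
  rw [tropEvalR, Finset.fold_max_le]
  refine ⟨le_max_left _ _, ?_⟩
  intro s _
  -- per-functional analysis
  set a : Fin q → ℤ := fun t => dotZ (c s) (F.v t) with ha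
  have hai_le : a i ≤ 1 := by
    have := hterm s (V i)
    rw [← hM, hMi] at this
    have : ((a i : ℤ) : ℝ) ≤ 1 := by rw [ha]; rw [← dot_cast]; exact this
    exact_mod_cast this
  have hat_le : ∀ t, t ≠ i → a t ≤ 0 := by
    intro t ht
    have := hterm s (V t)
    rw [← hM, hMt0 t ht] at this
    have : ((a t : ℤ) : ℝ) ≤ 0 := by rw [ha]; rw [← dot_cast]; exact this
    exact_mod_cast this
  have hsumZ : ∑ t, F.w t * a t = 0 := by
    calc ∑ t, F.w t * a t = ∑ t, ∑ j, c s j * (F.w t * F.v t j) := by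
          apply Finset.sum_congr rfl
          intro t _
          rw [ha]; simp only [dotZ, Finset.mul_sum]
          apply Finset.sum_congr rfl; intro j _; ring
      _ = ∑ j, c s j * ∑ t, F.w t * F.v t j := by
          rw [Finset.sum_comm]
          apply Finset.sum_congr rfl; intro j _
          rw [Finset.mul_sum]
      _ = 0 := by simp [hbal]
  have hsplitZ : a i + ∑ t ∈ Finset.univ.erase i, F.w t * a t = 0 := by
    have h : F.w i * a i + ∑ t ∈ Finset.univ.erase i, F.w t * a t =
        ∑ t, F.w t * a t :=
      Finset.add_sum_erase Finset.univ (fun t => F.w t * a t) (Finset.mem_univ i)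
    rw [hsumZ, hwi1, one_mul] at h
    exact h
  have htail_np : ∀ t ∈ Finset.univ.erase i, F.w t * a t ≤ 0 := by
    intro t ht
    exact mul_nonpos_of_nonneg_of_nonpos (F.w_pos t).le
      (hat_le t (Finset.mem_erase.mp ht).1)
  have hai_nn : 0 ≤ a i := by
    have := Finset.sum_nonpos htail_np
    omega
  -- case split
  rcases (by omega : a i = 0 ∨ a i = 1) with h0 | h1
  · -- all a t = 0, functional is zero
    have htail0 : ∀ t ∈ Finset.univ.erase i, F.w t * a t = 0 := by
      apply (Finset.sum_eq_zero_iff_of_nonpos htail_np).mp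
      omega
    have hall : ∀ t, a t = 0 := by
      intro t
      by_cases ht : t = i
      · rw [ht]; exact h0
      · have := htail0 t (Finset.mem_erase.mpr ⟨ht, Finset.mem_univ t⟩)
        have hw := (F.w_pos t).ne'
        exact (mul_eq_zero.mp this).resolve_left hw
    calc ∑ j, (c s j : ℝ) * x j
        = ∑ j, (((fun _ => (0:ℤ)) j : ℤ) : ℝ) * x j :=
          eq_on_span F (c s) (fun _ => 0) (fun t => by simpa [dotZ, ha] using hall t) x
      _ = 0 := by simp
      _ ≤ _ := le_max_left _ _
  · -- exactly one b with w b * a b = -1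
    have hsum_tail : ∑ t ∈ Finset.univ.erase i, F.w t * a t = -1 := by omega
    obtain ⟨b, hb, hbne⟩ : ∃ b ∈ Finset.univ.erase i, F.w b * a b ≠ 0 := by
      by_contra h
      push_neg at h
      rw [Finset.sum_eq_zero h] at hsum_tail
      omega
    have hbneg : F.w b * a b < 0 := lt_of_le_of_ne (htail_np b hb) hbne
    have hrest : ∑ t ∈ (Finset.univ.erase i).erase b, F.w t * a t = -1 - F.w b * a b := by
      have h : F.w b * a b + ∑ t ∈ (Finset.univ.erase i).erase b, F.w t * a t =
          ∑ t ∈ Finset.univ.erase i, F.w t * a t :=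
        Finset.add_sum_erase (Finset.univ.erase i) (fun t => F.w t * a t) hb
      omega
    have hrest_np : ∀ t ∈ (Finset.univ.erase i).erase b, F.w t * a t ≤ 0 := by
      intro t ht
      exact htail_np t (Finset.mem_of_mem_erase ht)
    have hrest_le : ∑ t ∈ (Finset.univ.erase i).erase b, F.w t * a t ≤ 0 :=
      Finset.sum_nonpos hrest_np
    have hgb : F.w b * a b = -1 := by omega
    have hrest0 : ∀ t ∈ (Finset.univ.erase i).erase b, F.w t * a t = 0 :=
      (Finset.sum_eq_zero_iff_of_nonpos hrest_np).mp (by omega)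
    have hwb1 : F.w b = 1 := by
      have hd : F.w b ∣ (1 : ℤ) := by
        have h1 : F.w b ∣ (-1 : ℤ) := ⟨a b, hgb.symm⟩
        exact (dvd_neg).mp h1
      exact Int.eq_one_of_dvd_one (F.w_pos b).le hd
    have hab : a b = -1 := by rw [hwb1, one_mul] at hgb; exact hgb
    have hbnei : b ≠ i := (Finset.mem_erase.mp hb).1
    have hother : ∀ t, t ≠ i → t ≠ b → a t = 0 := by
      intro t hti htb
      have ht : t ∈ (Finset.univ.erase i).erase b :=
        Finset.mem_erase.mpr ⟨htb, Finset.mem_erase.mpr ⟨hti, Finset.mem_univ t⟩⟩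
      have := hrest0 t ht
      exact (mul_eq_zero.mp this).resolve_left (F.w_pos t).ne'
    have hgalb : IsGallery F i b (c s) :=
      ⟨fun h => hbnei h.symm, hwi1, hwb1, h1, hab, hother⟩
    have hbJ : b ∈ J := by
      by_contra hbJ
      exact hsat b hbJ hbnei ⟨c s, hgalb⟩
    obtain ⟨_, _, _, hli, hlb, hlo⟩ := hgal b hbJ
    have heq : ∀ t, dotZ (c s) (F.v t) = dotZ (l b) (F.v t) := by
      intro t
      by_cases hti : t = i
      · rw [hti, hli]; exact h1
      · by_cases htb : t = b
        · rw [htb, hlb]; exact hab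
        · rw [hlo t hti htb]; exact hother t hti htb
    calc ∑ j, (c s j : ℝ) * x j = ∑ j, (l b j : ℝ) * x j := eq_on_span F (c s) (l b) heq x
      _ ≤ J.sup' hJ fun j => ∑ u, (l j u : ℝ) * x u := Finset.le_sup' (fun j => ∑ u, (l j u : ℝ) * x u) hbJ
      _ ≤ max 0 (J.sup' hJ fun j => ∑ u, (l j u : ℝ) * x u) := le_max_right _ _
end

section
/- Fibres of Bergman projections lie in one gallery class (Lemma 3.14): Let F be a one-dimensional tropical fan in ℝ^n with primitive generators v_1, …, v_q and weights ω_1, …, ω_q, and let π : ℤ^n → ℤ^k be a ℤ-linear map satisfying: (i) for every index j, the image π(v_j) is either 0, or a positive integer multiple of a standard basis vector e_s (1 ≤ s ≤ k), or a positive integer multiple of −(e_1 + ⋯ + e_k); (ii) for every s ∈ {1,…,k}, Σ ω_j c_j = 1, the sum running over indices j with π(v_j) = c_j e_s, c_j a positive integer; and (iii) Σ ω_j c_j = 1, the sum running over indices j with π(v_j) = −c_j (e_1 + ⋯ + e_k), c_j a positive integer. Then for any two distinct indices a, b with π(v_a) ≠ 0 and π(v_b) ≠ 0 there exists a gallery of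 F on (a, b); in particular all rays of F not mapped to 0 by π lie in a single equivalence class of the gallery relation. -/
/-
Under `π` every ray of `F` goes to `0` or to a positive multiple of one of the rays
`e₁, …, e_k, -(e₁ + ⋯ + e_k)` of the Bergman fan. Conditions (ii) and (iii) say that the weighted
multiplicities over each Bergman ray sum to `1`; as all terms are positive integers, exactly one ray
of `F` lies over each Bergman ray, with weight `1` and with image the primitive generator itself.
Any two distinct Bergman rays are joined by a gallery `ψ` of the Bergman fan (`xₛ - xₜ`, `xₛ` or
`-xₜ`), and `ψ ∘ π` is then a gallery of `F`.
-/

lemma Finset.exists_eq_singleton_of_sum_eq_one {α : Type*} {S : Finset α} {f : α → ℤ}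
    (hf : ∀ j ∈ S, 1 ≤ f j) (hs : ∑ j ∈ S, f j = 1) : ∃ a, S = {a} ∧ f a = 1 := by
  have hcard : (S.card : ℤ) ≤ 1 := by
    calc (S.card : ℤ) = S.card • (1 : ℤ) := by simp
    _ ≤ ∑ j ∈ S, f j := S.card_nsmul_le_sum f 1 hf
    _ = 1 := hs
  have hne : S.Nonempty := Finset.nonempty_of_sum_ne_zero (f := f) (by rw [hs]; exact one_ne_zero)
  obtain ⟨a, rfl⟩ := Finset.card_eq_one.mp (le_antisymm (by exact_mod_cast hcard) hne.card_pos)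
  exact ⟨a, rfl, by simpa using hs⟩

lemma dotZ_eq_apply {n : ℕ} (f : (Fin n → ℤ) →ₗ[ℤ] ℤ) (x : Fin n → ℤ) :
    dotZ (fun i => f (Pi.single i 1)) x = f x := by
  rw [f.pi_apply_eq_sum_univ x, dotZ]
  refine Finset.sum_congr rfl fun i _ => ?_
  have hsingle : (fun j => if i = j then (1 : ℤ) else 0) = Pi.single i 1 := by
    ext j; simp [Pi.single_apply, eq_comm]
  rw [hsingle, smul_eq_mul, mul_comm]

def IsPosMultiple {M : Type*} [AddCommGroup M] (d x : M) : Prop := ∃ c : ℤ, 0 < c ∧ x = c • d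

open scoped Classical in
lemma IsPosMultiple.unique_of_weighted_sum_eq_one {ι M : Type*} [Fintype ι] [AddCommGroup M]
    {w : ι → ℤ} (hw : ∀ i, 0 < w i) {x : ι → M} {d : M} (φ : M →ₗ[ℤ] ℤ) (hφ : φ d = 1)
    (hsum : ∑ j ∈ Finset.univ.filter (fun j => IsPosMultiple d (x j)), w j * φ (x j) = 1)
    {j : ι} (hj : IsPosMultiple d (x j)) : w j = 1 ∧ x j = d ∧ ∀ i, x i = x j → i = j := by
  have hterm : ∀ i ∈ Finset.univ.filter (fun j => IsPosMultiple d (x j)), 1 ≤ w i * φ (x i) := by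
    intro i hi
    obtain ⟨c, hc, hxi⟩ := (Finset.mem_filter.1 hi).2
    have := Int.mul_pos (hw i) hc
    rw [hxi, map_zsmul, hφ, smul_eq_mul, mul_one]
    omega
  obtain ⟨a, hS, ha⟩ := Finset.exists_eq_singleton_of_sum_eq_one hterm hsum
  have mem_iff : ∀ i, IsPosMultiple d (x i) ↔ i = a := fun i => by
    simpa using (Finset.ext_iff.1 hS) i
  obtain rfl := (mem_iff j).1 hj
  obtain ⟨c, hc, hxj⟩ := hj
  rw [hxj, map_zsmul, hφ, smul_eq_mul, mul_one] at ha
  obtain rfl := Int.eq_one_of_mul_eq_one_left hc.le ha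
  rw [one_smul] at hxj
  refine ⟨Int.eq_one_of_mul_eq_one_right (hw j).le ha, hxj, fun i hi => (mem_iff i).1 ?_⟩
  exact ⟨1, one_pos, by rw [hi, hxj, one_smul]⟩

def bergmanRays (k : ℕ) : Set (Fin k → ℤ) :=
  insert (-1) (Set.range fun s => (Pi.single s 1 : Fin k → ℤ))

lemma exists_bergman_gallery_single {k : ℕ} {s : Fin k} {d : Fin k → ℤ}
    (hd : d ∈ bergmanRays k) (hne : Pi.single s 1 ≠ d) :
    ∃ ψ : (Fin k → ℤ) →ₗ[ℤ] ℤ, ψ (Pi.single s 1) = 1 ∧ ψ d = -1 ∧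
      ∀ e ∈ bergmanRays k, e ≠ Pi.single s 1 → e ≠ d → ψ e = 0 := by
  rcases hd with rfl | ⟨t, rfl⟩
  · refine ⟨LinearMap.proj s, by simp, by simp, ?_⟩
    rintro e (rfl | ⟨u, rfl⟩) hes hed
    · exact absurd rfl hed
    · have hus : u ≠ s := fun h => hes (h ▸ rfl)
      simp [hus]
  · have hts : t ≠ s := fun h => hne (h ▸ rfl)
    refine ⟨LinearMap.proj s - (LinearMap.proj t : (Fin k → ℤ) →ₗ[ℤ] ℤ), by simp [hts],
      by simp [hts.symm], ?_⟩
    rintro e (rfl | ⟨u, rfl⟩) hes het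
    · simp
    · have hus : u ≠ s := fun h => hes (h ▸ rfl)
      have hut : u ≠ t := fun h => het (h ▸ rfl)
      simp [hus, hut]

lemma exists_bergman_gallery {k : ℕ} {d d' : Fin k → ℤ} (hd : d ∈ bergmanRays k)
    (hd' : d' ∈ bergmanRays k) (hne : d ≠ d') :
    ∃ ψ : (Fin k → ℤ) →ₗ[ℤ] ℤ, ψ d = 1 ∧ ψ d' = -1 ∧
      ∀ e ∈ bergmanRays k, e ≠ d → e ≠ d' → ψ e = 0 := by
  rcases hd with rfl | ⟨s, rfl⟩
  · rcases hd' with rfl | ⟨t, rfl⟩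
    · exact absurd rfl hne
    obtain ⟨ψ, hψt, hψd, hψ0⟩ := exists_bergman_gallery_single (Set.mem_insert _ _) hne.symm
    exact ⟨-ψ, by simp [hψd], by simp [hψt], fun e he hed hed' => by simp [hψ0 e he hed' hed]⟩
  · exact exists_bergman_gallery_single hd' hne

open scoped Classical in
lemma weight_eq_one_and_mem_bergmanRays {ι : Type*} [Fintype ι] {k : ℕ} {w : ι → ℤ}
    {x : ι → Fin k → ℤ} (hk : 0 < k) (hw : ∀ i, 0 < w i)
    (h1 : ∀ j, x j = 0 ∨ (∃ (s : Fin k) (c : ℤ), 0 < c ∧ x j = c • Pi.single s 1) ∨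
        (∃ c : ℤ, 0 < c ∧ x j = fun _ => -c))
    (h2 : ∀ s : Fin k,
        ∑ j ∈ Finset.univ.filter (fun j => ∃ c : ℤ, 0 < c ∧ x j = c • Pi.single s 1),
          w j * x j s = 1)
    (h3 : ∑ j ∈ Finset.univ.filter (fun j => ∃ c : ℤ, 0 < c ∧ x j = fun _ => -c),
          w j * (-(x j ⟨0, hk⟩)) = 1)
    {j : ι} (hj : x j ≠ 0) : w j = 1 ∧ x j ∈ bergmanRays k ∧ ∀ i, x i = x j → i = j := by
  rcases h1 j with h0 | ⟨s, hs⟩ | hneg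
  · exact absurd h0 hj
  · obtain ⟨hwj, hxj, hinj⟩ :=
      IsPosMultiple.unique_of_weighted_sum_eq_one (x := x) hw (LinearMap.proj s) (by simp) (h2 s) hs
    exact ⟨hwj, hxj ▸ Or.inr ⟨s, rfl⟩, hinj⟩
  · have hiff : ∀ i, (∃ c : ℤ, 0 < c ∧ x i = fun _ => -c) ↔ IsPosMultiple (-1) (x i) := by
      have hconst : ∀ c : ℤ, (fun _ : Fin k => -c) = c • (-1) := fun c => by ext; simp
      simp only [hconst, IsPosMultiple, implies_true]
    rw [Finset.filter_congr fun i _ => hiff i] at h3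
    obtain ⟨hwj, hxj, hinj⟩ := IsPosMultiple.unique_of_weighted_sum_eq_one hw
      (-LinearMap.proj ⟨0, hk⟩) (by simp) h3 ((hiff j).1 hneg)
    exact ⟨hwj, hxj ▸ Set.mem_insert _ _, hinj⟩

open scoped Classical in
/-- Fibres of Bergman projections lie in one gallery class (Lemma 3.14): if the
ℤ-linear map `π` pushes `F` forward to the one-dimensional Bergman fan in ℝᵏ with
weights `1`, then any two rays of `F` not killed by `π` are joined by a gallery. -/
theorem bergman_fibre_single_class {n q k : ℕ} (hk : 0 < k) (F : TropFan1 n q)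
    (π : (Fin n → ℤ) →ₗ[ℤ] (Fin k → ℤ))
    (h1 : ∀ j : Fin q, π (F.v j) = 0 ∨
        (∃ (s : Fin k) (c : ℤ), 0 < c ∧ π (F.v j) = c • Pi.single s 1) ∨
        (∃ c : ℤ, 0 < c ∧ π (F.v j) = fun _ => -c))
    (h2 : ∀ s : Fin k,
        ∑ j ∈ Finset.univ.filter
            (fun j => ∃ c : ℤ, 0 < c ∧ π (F.v j) = c • Pi.single s 1),
          F.w j * (π (F.v j) s) = 1)
    (h3 : ∑ j ∈ Finset.univ.filter
            (fun j => ∃ c : ℤ, 0 < c ∧ π (F.v j) = fun _ => -c),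
          F.w j * (-(π (F.v j) ⟨0, hk⟩)) = 1) :
    ∀ a b : Fin q, a ≠ b → π (F.v a) ≠ 0 → π (F.v b) ≠ 0 →
      ∃ l : Fin n → ℤ, IsGallery F a b l := by
  intro a b hab ha hb
  have fibre := fun j (hj : π (F.v j) ≠ 0) =>
    weight_eq_one_and_mem_bergmanRays (x := fun j => π (F.v j)) hk F.w_pos h1 h2 h3 hj
  obtain ⟨hwa, hrays_a, hinj_a⟩ := fibre a ha
  obtain ⟨hwb, hrays_b, hinj_b⟩ := fibre b hb
  obtain ⟨ψ, hψa, hψb, hψ0⟩ := exists_bergman_gallery hrays_a hrays_b fun h => hab (hinj_b a h)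
  refine ⟨fun i => (ψ ∘ₗ π) (Pi.single i 1), hab, hwa, hwb, ?_, ?_, fun j hja hjb => ?_⟩
  · rwa [dotZ_eq_apply]
  · rwa [dotZ_eq_apply]
  rw [dotZ_eq_apply, LinearMap.comp_apply]
  by_cases hj : π (F.v j) = 0
  · rw [hj, map_zero]
  · exact hψ0 _ (fibre j hj).2.1 (fun h => hja (hinj_a j h)) (fun h => hjb (hinj_b j h))
end

section
/- Dimension of the span of a gallery class (Proposition 3.17): Let F be a one-dimensional tropical fan in ℝ^n with primitive generators v_1, …, v_q spanning ℝ^n and weights ω_1, …, ω_q. Fix an index m and distinct indices i_1, …, i_k ∈ {1,…,q} \ {m} (k ≥ 1), and for each t let l_t ∈ (ℤ^n)^∨ be a gallery of F on (i_t, m), i.e. l_t(v_{i_t}) = 1, l_t(v_m) = −1, l_t(v_j) = 0 for j ∉ {i_t, m}, and ω_m = ω_{i_t} = 1. Assume F is irreducible in the following sense: there is no nonempty proper subset S ⊊ {1,…,q} with Σ_{j ∈ S} ω_j v_j = 0. Assume also {m, i_1, …, i_k} ≠ {1,…,q}. Then the real span of {v_m, v_{i_1}, …, v_{i_k}} has dimension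 k + 1. -/
/-!
Applying the gallery `l_t` to a linear relation `c₀ v_m + ∑ c_t v_{i_t} = 0` gives `c_t = c₀`,
so the relation is `c₀ (v_m + ∑ v_{i_t}) = 0`. All weights involved are `1`, so
`v_m + ∑ v_{i_t}` is the weighted sum of the generators over `{m, i_1, …, i_k}`, a nonempty
proper subset of the rays; by irreducibility it is nonzero, hence `c₀ = 0`.
-/

open Finset

theorem linearIndependent_cons_of_dual {K V : Type*} [Field K] [AddCommGroup V] [Module K V]
    {k : ℕ} (u₀ : V) (u : Fin k → V) (φ : Fin k → Module.Dual K V)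
    (hφu₀ : ∀ t, φ t u₀ = -1) (hφu : ∀ t, φ t (u t) = 1)
    (hφu_ne : ∀ s t, s ≠ t → φ t (u s) = 0) (hsum : u₀ + ∑ t, u t ≠ 0) :
    LinearIndependent K (Fin.cons u₀ u : Fin (k + 1) → V) := by
  rw [Fintype.linearIndependent_iff]
  intro c hc
  simp only [Fin.sum_univ_succ, Fin.cons_zero, Fin.cons_succ] at hc
  have hc_succ : ∀ t : Fin k, c t.succ = c 0 := by
    intro t
    have h := congrArg (φ t) hc
    simp only [map_add, map_sum, map_smul, hφu₀, smul_eq_mul, map_zero] at h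
    rw [sum_eq_single t (fun s _ hst => by rw [hφu_ne s t hst, mul_zero])
      (by simp), hφu] at h
    linear_combination h
  have hc₀ : c 0 = 0 := by
    simp only [hc_succ, ← smul_sum, ← smul_add] at hc
    exact (smul_eq_zero.mp hc).resolve_right hsum
  intro s
  induction s using Fin.cases with
  | zero => exact hc₀
  | succ t => rw [hc_succ, hc₀]

def dotZReal {n : ℕ} (l : Fin n → ℤ) : Module.Dual ℝ (Fin n → ℝ) :=
  dotProductBilin ℝ ℝ (Int.cast ∘ l)

theorem dotZReal_intCast {n : ℕ} (l x : Fin n → ℤ) :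
    dotZReal l (Int.cast ∘ x) = dotZ l x :=
  ((Int.castRingHom ℝ).map_dotProduct l x).symm

namespace TropFan1

variable {n q : ℕ} (F : TropFan1 n q)

def IsIrreducible : Prop :=
  ¬ ∃ S : Finset (Fin q), S.Nonempty ∧ S ≠ univ ∧ ∑ j ∈ S, F.w j • F.v j = 0

variable {F}

theorem IsIrreducible.sum_ne_zero (hF : F.IsIrreducible) {S : Finset (Fin q)}
    (hS : S.Nonempty) (hS_ne : S ≠ univ) (hw : ∀ j ∈ S, F.w j = 1) :
    ∑ j ∈ S, F.v j ≠ 0 := by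
  intro h
  refine hF ⟨S, hS, hS_ne, ?_⟩
  rwa [sum_congr rfl fun j hj => by rw [hw j hj, one_smul]]

end TropFan1

namespace IsGallery

variable {n q : ℕ} {F : TropFan1 n q} {a b : Fin q} {l : Fin n → ℤ}

theorem dotZReal_left (h : IsGallery F a b l) : dotZReal l (Int.cast ∘ F.v a) = 1 := by
  rw [dotZReal_intCast, h.2.2.2.1, Int.cast_one]

theorem dotZReal_right (h : IsGallery F a b l) : dotZReal l (Int.cast ∘ F.v b) = -1 := by
  rw [dotZReal_intCast, h.2.2.2.2.1, Int.cast_neg, Int.cast_one]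

theorem dotZReal_of_ne (h : IsGallery F a b l) {j : Fin q} (ha : j ≠ a) (hb : j ≠ b) :
    dotZReal l (Int.cast ∘ F.v j) = 0 := by
  rw [dotZReal_intCast, h.2.2.2.2.2 j ha hb, Int.cast_zero]

end IsGallery

theorem TropFan1.IsIrreducible.gen_add_sum_gallery_gens_ne_zero {n q k : ℕ}
    {F : TropFan1 n q} (hF : F.IsIrreducible) (hk : 1 ≤ k) {m : Fin q} {i : Fin k → Fin q}
    (hi : Function.Injective i) (him : ∀ t, i t ≠ m) {l : Fin k → Fin n → ℤ}
    (hgal : ∀ t, IsGallery F (i t) m (l t)) (hne : insert m (image i univ) ≠ univ) :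
    F.v m + ∑ t, F.v (i t) ≠ 0 := by
  have hm : m ∉ image i univ := by simpa using fun t => him t
  have hw : ∀ j ∈ insert m (image i univ), F.w j = 1 := by
    simp only [mem_insert, mem_image, mem_univ, true_and]
    rintro j (rfl | ⟨t, rfl⟩)
    exacts [(hgal ⟨0, hk⟩).2.2.1, (hgal t).2.1]
  have h := hF.sum_ne_zero (insert_nonempty _ _) hne hw
  rwa [sum_insert hm, sum_image hi.injOn] at h

/-- Dimension of the span of a gallery class (Proposition 3.17): if `F` is irreducible,
each `l_t` is a gallery of `F` on `(i_t, m)`, and the rays `m, i_1, …, i_k` do not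
exhaust the rays of `F`, then the real span of `{v_m, v_{i_1}, …, v_{i_k}}` has
dimension `k + 1`. -/
theorem gallery_class_span_dim {n q k : ℕ} (hk : 1 ≤ k) (F : TropFan1 n q)
    (m : Fin q) (i : Fin k → Fin q) (hi : Function.Injective i) (him : ∀ t, i t ≠ m)
    (l : Fin k → Fin n → ℤ) (hgal : ∀ t, IsGallery F (i t) m (l t))
    (hirr : ¬ ∃ S : Finset (Fin q), S.Nonempty ∧ S ≠ Finset.univ ∧
      ∑ j ∈ S, F.w j • F.v j = 0)
    (hne : insert m (Finset.image i Finset.univ) ≠ Finset.univ) :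
    Module.finrank ℝ ↥(Submodule.span ℝ
      (insert (fun j => ((F.v m j : ℝ)))
        (Set.range fun t => fun j => ((F.v (i t) j : ℝ))))) = k + 1 := by
  have hsumZ := TropFan1.IsIrreducible.gen_add_sum_gallery_gens_ne_zero hirr hk hi him hgal hne
  have hsum : (Int.cast ∘ F.v m : Fin n → ℝ) + ∑ t, Int.cast ∘ F.v (i t) ≠ 0 := by
    have h := (map_ne_zero_iff ((Int.castAddHom ℝ).compLeft (Fin n))
      Int.cast_injective.comp_left).mpr hsumZ
    rwa [map_add, map_sum] at h
  have hli := linearIndependent_cons_of_dual _ _ (fun t => dotZReal (l t))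
    (fun t => (hgal t).dotZReal_right) (fun t => (hgal t).dotZReal_left)
    (fun s t hst => (hgal t).dotZReal_of_ne (hi.ne hst) (him s)) hsum
  rw [← Fin.range_cons]
  exact (finrank_span_eq_card hli).trans (Fintype.card_fin _)
end

section
/- Detection of a balanced subfan inside a gallery class (key step in the proof of Proposition 3.17): Let F be a one-dimensional tropical fan in ℝ^n with primitive generators v_1, …, v_q and weights ω_1, …, ω_q. Fix an index m and distinct indices i_1, …, i_k ∈ {1,…,q} \ {m} (k ≥ 1), and for each t let l_t ∈ (ℤ^n)^∨ be a gallery of F on (i_t, m), i.e. l_t(v_{i_t}) = 1, l_t(v_m) = −1, l_t(v_j) = 0 for j ∉ {i_t, m}. Then: (i) the vectors v_{i_1}, …, v_{i_k} are linearly independent over ℝ; and (ii) if the family {v_m, v_{i_1}, …, v_{i_k}} is linearly dependent over ℝ, then v_m + v_{i_1} + ⋯ + v_{i_k} = 0. -/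
/-!
The galleries `l_t` form a family of functionals dual to `v_{i_1}, …, v_{i_k}`: `l_t(v_{i_s}) = δ_{ts}`.
A family admitting such a biorthogonal system is linearly independent, and every vector `x` in its
span is recovered as `∑ t, l_t(x) • v_{i_t}`. If `v_m` lies in the span, then `l_t(v_m) = -1` for
all `t` gives `v_m = -∑ t, v_{i_t}`.
-/

open Module Submodule

section Biorthogonal

variable {R M ι : Type*} [CommSemiring R] [AddCommMonoid M] [Module R M] [Fintype ι]
  [DecidableEq ι] {v : ι → M} {f : ι → Dual R M}

theorem apply_sum_smul_of_biorthogonal (hfv : ∀ s t, f s (v t) = if s = t then 1 else 0)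
    (c : ι → R) (s : ι) : f s (∑ t, c t • v t) = c s := by
  simp [hfv]

theorem linearIndependent_of_biorthogonal (hfv : ∀ s t, f s (v t) = if s = t then 1 else 0) :
    LinearIndependent R v :=
  Fintype.linearIndependent_iffₛ.mpr fun c d hcd s => by
    rw [← apply_sum_smul_of_biorthogonal hfv c s, hcd, apply_sum_smul_of_biorthogonal hfv]

theorem eq_sum_smul_of_mem_span_of_biorthogonal
    (hfv : ∀ s t, f s (v t) = if s = t then 1 else 0) {x : M} (hx : x ∈ span R (Set.range v)) :
    x = ∑ t, f t x • v t := by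
  obtain ⟨c, rfl⟩ := (mem_span_range_iff_exists_fun R).mp hx
  simp only [apply_sum_smul_of_biorthogonal hfv]

end Biorthogonal

theorem dotProductBilin_intCast_apply {n : ℕ} (l x : Fin n → ℤ) :
    dotProductBilin ℝ ℝ (fun j => (l j : ℝ)) (fun j => (x j : ℝ)) = dotZ l x :=
  ((Int.castRingHom ℝ).map_dotProduct l x).symm

theorem dotProductBilin_gallery_biorthogonal {n q k : ℕ} {F : TropFan1 n q} {m : Fin q}
    {i : Fin k → Fin q} (hi : Function.Injective i) (him : ∀ t, i t ≠ m)
    {l : Fin k → Fin n → ℤ} (hgal : ∀ t, IsGallery F (i t) m (l t)) (s t : Fin k) :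
    dotProductBilin ℝ ℝ (fun j => (l s j : ℝ)) (fun j => (F.v (i t) j : ℝ)) =
      if s = t then 1 else 0 := by
  obtain ⟨-, -, -, hself, -, hother⟩ := hgal s
  rw [dotProductBilin_intCast_apply]
  split_ifs with hst
  · simp [← hst, hself]
  · simp [hother (i t) (fun h => hst (hi h).symm) (him t)]

theorem gallery_class_balanced_subfan_general {n q k : ℕ} (F : TropFan1 n q)
    (m : Fin q) (i : Fin k → Fin q) (hi : Function.Injective i) (him : ∀ t, i t ≠ m)
    (l : Fin k → Fin n → ℤ) (hgal : ∀ t, IsGallery F (i t) m (l t)) :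
    LinearIndependent ℝ (fun t : Fin k => fun j => ((F.v (i t) j : ℝ))) ∧
    (¬ LinearIndependent ℝ
        (Fin.cons (fun j => ((F.v m j : ℝ)))
          (fun s => fun j => ((F.v (i s) j : ℝ))) : Fin (k + 1) → Fin n → ℝ) →
      F.v m + ∑ t, F.v (i t) = 0) := by
  have hfv := dotProductBilin_gallery_biorthogonal hi him hgal
  have hli := linearIndependent_of_biorthogonal hfv
  refine ⟨hli, fun hdep => ?_⟩
  have hspan : (fun j => (F.v m j : ℝ)) ∈ span ℝ (Set.range fun t j => (F.v (i t) j : ℝ)) := by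
    by_contra hnot
    exact hdep (linearIndependent_finCons.mpr ⟨hli, hnot⟩)
  have hvm : ∀ t, dotZ (l t) (F.v m) = -1 := fun t => (hgal t).2.2.2.2.1
  have hreal := eq_sum_smul_of_mem_span_of_biorthogonal hfv hspan
  simp only [dotProductBilin_intCast_apply, hvm] at hreal
  funext j
  have hj := congrFun hreal j
  simp only [Finset.sum_apply, Pi.smul_apply, smul_eq_mul, Int.cast_neg, Int.cast_one, neg_one_mul,
    Finset.sum_neg_distrib] at hj
  simp only [Pi.add_apply, Finset.sum_apply, Pi.zero_apply]
  exact_mod_cast eq_neg_iff_add_eq_zero.mp hj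

/-- Detection of a balanced subfan inside a gallery class (key step in the proof of
Proposition 3.17): (i) the vectors `v_{i_1}, …, v_{i_k}` are linearly independent over
ℝ; (ii) if the family `{v_m, v_{i_1}, …, v_{i_k}}` is linearly dependent over ℝ, then
`v_m + v_{i_1} + ⋯ + v_{i_k} = 0`. -/
theorem gallery_class_balanced_subfan {n q k : ℕ} (hk : 1 ≤ k) (F : TropFan1 n q)
    (m : Fin q) (i : Fin k → Fin q) (hi : Function.Injective i) (him : ∀ t, i t ≠ m)
    (l : Fin k → Fin n → ℤ) (hgal : ∀ t, IsGallery F (i t) m (l t)) :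
    LinearIndependent ℝ (fun t : Fin k => fun j => ((F.v (i t) j : ℝ))) ∧
    (¬ LinearIndependent ℝ
        (Fin.cons (fun j => ((F.v m j : ℝ)))
          (fun s => fun j => ((F.v (i s) j : ℝ))) : Fin (k + 1) → Fin n → ℝ) →
      F.v m + ∑ t, F.v (i t) = 0) :=
  gallery_class_balanced_subfan_general F m i hi him l hgal
end
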